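/- Every player-specific singleton congestion game with nondecreasing cost functions possesses a pure Nash equilibrium: there exists a strategy profile σ with σ(i) ∈ S_i for every player i such that no player i can strictly decrease its cost c_{i,σ(i)}(n_{σ(i)}(σ)) by unilaterally switching to another resource r ∈ S_i. This is the equilibrium-existence guarantee the paper invokes for the membership clarification phase of ROSS. -/
import Mathlib


/-- The congestion (load) of resource `r` under strategy profile `σ`:
the number of players currently choosing `r`. -/
def load {P R : Type*} [Fintype P] [DecidableEq R] (σ : P → R) (r : R) : ℕ :=
  (Finset.univ.filter fun j => σ j = r).card

section Aux

variable {P R : Type*} [DecidableEq P] [DecidableEq R]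

/-- Load restricted to a set `T` of active players. -/
def loadT (T : Finset P) (σ : P → R) (r : R) : ℕ :=
  (T.filter fun j => σ j = r).card

omit [DecidableEq P] in
lemma loadT_congr {T : Finset P} {f g : P → R} (h : ∀ j ∈ T, f j = g j) (r : R) :
    loadT T f r = loadT T g r := by
  unfold loadT
  congr 1
  apply Finset.filter_congr
  intro j hj
  simp [h j hj]

lemma loadT_insert {T : Finset P} {k : P} (hk : k ∉ T) (τ : P → R) (r : R) :
    loadT (insert k T) τ r = loadT T τ r + if τ k = r then 1 else 0 := by
  unfold loadT
  rw [Finset.filter_insert]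
  split
  · rw [Finset.card_insert_of_notMem (by simp [hk])]
  · simp

lemma loadT_update {T : Finset P} {τ : P → R} {j : P} (hj : j ∈ T) {r' : R}
    (hne : r' ≠ τ j) (r : R) :
    loadT T (Function.update τ j r') r + (if r = τ j then 1 else 0)
      = loadT T τ r + (if r = r' then 1 else 0) := by
  unfold loadT
  by_cases h1 : r = τ j
  · subst h1
    rw [if_pos rfl, if_neg (fun h => hne h.symm)]
    have hset : T.filter (fun i => Function.update τ j r' i = τ j)
        = (T.filter (fun i => τ i = τ j)).erase j := by
      ext i
      by_cases hij : i = j <;>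
        simp [Function.update, hij, fun h => hne h, Finset.mem_erase]
    rw [hset, Finset.card_erase_add_one (by simp [hj]), add_zero]
  · rw [if_neg h1]
    by_cases h2 : r = r'
    · rw [if_pos h2, add_zero]
      have hne' : τ j ≠ r := fun hh => hne ((hh.trans h2).symm)
      have hset : T.filter (fun i => Function.update τ j r' i = r)
          = insert j (T.filter (fun i => τ i = r)) := by
        ext i
        by_cases hij : i = j <;>
          simp [Function.update, hij, hj, h2.symm]
      rw [hset, Finset.card_insert_of_notMem (by simp [hne'])]
    · rw [if_neg h2, add_zero, add_zero]
      congr 1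
      apply Finset.filter_congr
      intro i hi
      by_cases hij : i = j <;> simp [Function.update, hij, h1, h2, Ne.symm]

/-- Inner lemma: starting from a state where loads are an equilibrium load
vector `L` plus one extra player on a "hot" resource `h`, where every player
is content w.r.t. the base loads `L` (invariant `hB`), and every player not
in `U` is even content w.r.t. `L`-plus-one loads (invariant `hM`), there is
an equilibrium for the player set `T'`. -/
lemma inner_stabilize
    (S : P → Finset R) (c : P → R → ℕ → ℝ) (hc : ∀ i r, Monotone (c i r))
    (T' : Finset P) (L : R → ℕ) :
    ∀ (n : ℕ) (U : Finset P) (τ : P → R) (h : R), U.card ≤ n →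
      (∀ i, τ i ∈ S i) →
      (∀ r, loadT T' τ r = L r + if r = h then 1 else 0) →
      (∀ j ∈ T', ∀ r ∈ S j, c j (τ j) (L (τ j)) ≤ c j r (L r + 1)) →
      (∀ j ∈ T', j ∉ U → ∀ r ∈ S j, c j (τ j) (L (τ j) + 1) ≤ c j r (L r + 1)) →
      ∃ σ' : P → R, (∀ i, σ' i ∈ S i) ∧
        ∀ i ∈ T', ∀ r ∈ S i,
          c i (σ' i) (loadT T' σ' (σ' i)) ≤ c i r (loadT T' σ' r + 1) := by
  classical
  intro n
  induction n with
  | zero =>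
      intro U τ h hcard hτS hload hB hM
      -- U is empty, so every player is content
      refine ⟨τ, hτS, ?_⟩
      intro i hi r hr
      have hU : U = ∅ := Finset.card_eq_zero.mp (Nat.le_zero.mp hcard)
      have hMi := hM i hi (by simp [hU]) r hr
      have h1 : loadT T' τ (τ i) ≤ L (τ i) + 1 := by
        rw [hload]; split <;> omega
      have h2 : L r + 1 ≤ loadT T' τ r + 1 := by
        rw [hload]; split <;> omega
      calc c i (τ i) (loadT T' τ (τ i)) ≤ c i (τ i) (L (τ i) + 1) := hc i (τ i) h1
        _ ≤ c i r (L r + 1) := hMi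
        _ ≤ c i r (loadT T' τ r + 1) := hc i r h2
  | succ n ih =>
      intro U τ h hcard hτS hload hB hM
      by_cases hcont : ∀ j ∈ T', ∀ r ∈ S j,
          c j (τ j) (loadT T' τ (τ j)) ≤ c j r (loadT T' τ r + 1)
      · exact ⟨τ, hτS, hcont⟩
      push_neg at hcont
      obtain ⟨j, hjT, r0, hr0, hlt⟩ := hcont
      have hLle : ∀ r, L r ≤ loadT T' τ r := by
        intro r; rw [hload]; split <;> omega
      -- the discontent player must be on the hot resource
      have hτjh : τ j = h := by
        by_contra hne
        have h1 : loadT T' τ (τ j) = L (τ j) := by rw [hload, if_neg hne, add_zero]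
        have h2 := hB j hjT r0 hr0
        have h3 := hc j r0 (Nat.succ_le_succ (hLle r0))
        rw [h1] at hlt
        exact absurd (le_trans h2 h3) (not_le.mpr hlt)
      -- the discontent player must not have moved before (j ∈ U)
      have hjU : j ∈ U := by
        by_contra hne
        have h1 : loadT T' τ (τ j) = L (τ j) + 1 := by
          rw [hload, if_pos hτjh]
        have h2 := hM j hjT hne r0 hr0
        have h3 := hc j r0 (Nat.succ_le_succ (hLle r0))
        rw [h1] at hlt
        exact absurd (le_trans h2 h3) (not_le.mpr hlt)
      -- best reply of j w.r.t. base loads plus one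
      obtain ⟨r', hr'S, hr'min⟩ :=
        (S j).exists_min_image (fun r => c j r (L r + 1)) ⟨τ j, hτS j⟩
      -- the best reply is a strict improvement, hence r' ≠ h
      have hstrict : c j r' (L r' + 1) < c j (τ j) (L (τ j) + 1) := by
        have h1 : loadT T' τ (τ j) = L (τ j) + 1 := by rw [hload, if_pos hτjh]
        have h3 := hc j r0 (Nat.succ_le_succ (hLle r0))
        calc c j r' (L r' + 1) ≤ c j r0 (L r0 + 1) := hr'min r0 hr0
          _ ≤ c j r0 (loadT T' τ r0 + 1) := h3
          _ < c j (τ j) (loadT T' τ (τ j)) := hlt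
          _ = c j (τ j) (L (τ j) + 1) := by rw [h1]
      have hr'ne : r' ≠ τ j := by
        intro hEq
        rw [hEq] at hstrict
        exact lt_irrefl _ hstrict
      -- move j to r'; recurse with U.erase j
      refine ih (U.erase j) (Function.update τ j r') r' ?_ ?_ ?_ ?_ ?_
      · have := Finset.card_erase_of_mem hjU
        omega
      · intro i
        by_cases hij : i = j
        · subst hij; rw [Function.update_self]; exact hr'S
        · rw [Function.update_of_ne hij]; exact hτS i
      · intro r
        have key := loadT_update hjT hr'ne r
        rw [hτjh] at key
        have hl := hload r
        by_cases h1 : r = h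
        · rw [if_pos h1] at key hl
          by_cases h2 : r = r'
          · rw [if_pos h2] at key; rw [if_pos h2]; omega
          · rw [if_neg h2] at key; rw [if_neg h2]; omega
        · rw [if_neg h1] at key hl
          by_cases h2 : r = r'
          · rw [if_pos h2] at key; rw [if_pos h2]; omega
          · rw [if_neg h2] at key; rw [if_neg h2]; omega
      · intro j' hj' r hr
        by_cases hj'j : j' = j
        · subst hj'j
          rw [Function.update_self]
          calc c j' r' (L r') ≤ c j' r' (L r' + 1) := hc j' r' (Nat.le_succ _)
            _ ≤ c j' r (L r + 1) := hr'min r hr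
        · rw [Function.update_of_ne hj'j]
          exact hB j' hj' r hr
      · intro j' hj' hj'U r hr
        by_cases hj'j : j' = j
        · subst hj'j
          rw [Function.update_self]
          exact hr'min r hr
        · rw [Function.update_of_ne hj'j]
          have : j' ∉ U := fun hmem => hj'U (Finset.mem_erase.mpr ⟨hj'j, hmem⟩)
          exact hM j' hj' this r hr

end Aux

/-- Every player-specific singleton congestion game with nondecreasing cost
functions possesses a pure Nash equilibrium: a profile `σ` with `σ i ∈ S i`
for all `i`, such that no player can strictly decrease its cost by unilaterally
switching to another resource in its strategy set. -/
theorem exists_pure_nash_equilibrium {P R : Type*}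
    [Fintype P] [Fintype R] [DecidableEq P] [DecidableEq R]
    (S : P → Finset R) (hS : ∀ i, (S i).Nonempty)
    (c : P → R → ℕ → ℝ) (hc : ∀ i r, Monotone (c i r)) :
    ∃ σ : P → R, (∀ i, σ i ∈ S i) ∧
      ∀ i : P, ∀ r ∈ S i,
        c i (σ i) (load σ (σ i)) ≤ c i r (load (Function.update σ i r) r) := by
  classical
  have main : ∀ T : Finset P, ∃ σ : P → R, (∀ i, σ i ∈ S i) ∧
      ∀ i ∈ T, ∀ r ∈ S i,
        c i (σ i) (loadT T σ (σ i)) ≤ c i r (loadT T σ r + 1) := by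
    intro T
    induction T using Finset.induction_on with
    | empty =>
        exact ⟨fun i => (hS i).choose, fun i => (hS i).choose_spec, by simp⟩
    | @insert k T hk ihT =>
        obtain ⟨σ, hσS, hσNE⟩ := ihT
        set L := loadT T σ with hL
        obtain ⟨rs, hrsS, hrsmin⟩ :=
          (S k).exists_min_image (fun r => c k r (L r + 1)) (hS k)
        apply inner_stabilize S c hc (insert k T) L (insert k T).card (insert k T)
          (Function.update σ k rs) rs le_rfl
        · intro i
          by_cases hik : i = k
          · subst hik; rw [Function.update_self]; exact hrsS
          · rw [Function.update_of_ne hik]; exact hσS i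
        · intro r
          rw [loadT_insert hk, Function.update_self,
            loadT_congr (g := σ) (fun j hj =>
              Function.update_of_ne (fun hEq => hk (by rwa [hEq] at hj)) _ _) r]
          by_cases h1 : r = rs
          · rw [if_pos h1, if_pos h1.symm]
          · rw [if_neg h1, if_neg (fun hEq => h1 hEq.symm)]
        · intro j hj r hr
          rcases Finset.mem_insert.mp hj with hjk | hjT
          · subst hjk
            rw [Function.update_self]
            calc c j rs (L rs) ≤ c j rs (L rs + 1) := hc j rs (Nat.le_succ _)
              _ ≤ c j r (L r + 1) := hrsmin r hr
          · rw [Function.update_of_ne (fun hEq => hk (by rwa [hEq] at hjT))]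
            exact hσNE j hjT r hr
        · intro j hj hjU
          exact absurd hj hjU
  obtain ⟨σ, hσS, hσNE⟩ := main Finset.univ
  refine ⟨σ, hσS, ?_⟩
  intro i r hr
  by_cases hri : r = σ i
  · subst hri
    rw [Function.update_eq_self]
  · have key := loadT_update (T := Finset.univ) (Finset.mem_univ i) hri r
    rw [if_neg hri, if_pos rfl, add_zero] at key
    have h1 : load (Function.update σ i r) r = load σ r + 1 := key
    rw [h1]
    exact hσNE i (Finset.mem_univ i) r hr
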